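/- arXiv:1508.00827 — 3 statements merged into one kernel-verified Lean document; each statement's English description precedes it below -/
import Mathlib

section
/- Let s < −1/2 and let θ > 0 satisfy s < −1/2 − 3θ. There exist c > 0 and N₀ such that for every integer N ≥ N₀ the following holds. Set R = N^{−1/2−s} and A = N^{1−θ}, let φ_N(x) = R Σ_{n∈S} e^{2πinx} where S = {n ∈ ℤ : |n − N| ≤ A/2 or |n − 2N| ≤ A/2}, let w(x,t) = φ_N(x) e^{i|φ_N(x)|² t}, and set T_N = N^{2s−1−θ}. Then (Σ_{n∈ℤ, |n|<N} (1+n²)^s |ŵ(n, T_N)|²)^{1/2} ≥ c N^{−1/2 − s − 3θ}, where ŵ(n,t) = ∫₀¹ w(x,t) e^{−2πinx} dx. -/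
/-!
No frequency of `φ` vanishes, so the zero mode of `w(T) = φ e^{iT|φ|²}` is produced by the cubic
term of `e^{iT|φ|²} = 1 + iT|φ|² + O(T²|φ|⁴)`: `ŵ(0, T) ≈ iT ∫ |φ|²φ = iT R³ q`, where `q` counts
the triples `a + b = c` in `S`. Pairs of frequencies within `A/4` of `N` sum to frequencies within
`A/2` of `2N`, so `q ≥ (A/4)²`. The Taylor remainder is at most `T² ‖φ‖_∞³ ‖φ‖_{L²}² ≤ T² R⁵ |S|⁴`,
which is negligible because `T R² A² = N^{-3θ}` and `T R² = N^{-2-θ}` tend to `0`. Hence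
`|ŵ(0, T)| ≳ T R³ A² = N^{-1/2-s-3θ}`, and the zero mode enters the low-frequency `H^s` norm with
weight `1`.
-/
open scoped Real

/-- Fourier coefficient of a 1-periodic function `f : ℝ → ℂ`:
`f̂(n) = ∫₀¹ f(x) e^{−2πinx} dx`. -/
noncomputable def fourierCoeff1 (f : ℝ → ℂ) (n : ℤ) : ℂ :=
  ∫ x in (0:ℝ)..1, f x * Complex.exp (-2 * (π : ℂ) * Complex.I * (n : ℂ) * (x : ℂ))

/-- `φ(x) = R Σ_{n∈S} e^{2πinx}` where
`S = {n ∈ ℤ : |n − N| ≤ A/2 or |n − 2N| ≤ A/2}`. -/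
noncomputable def phiPacket (R A N : ℝ) (x : ℝ) : ℂ :=
  (R : ℂ) * ∑' n : ℤ,
    if |(n:ℝ) - N| ≤ A/2 ∨ |(n:ℝ) - 2*N| ≤ A/2
      then Complex.exp (2 * (π : ℂ) * Complex.I * (n : ℂ) * (x : ℂ)) else 0

/-- Solution `w(x,t) = φ(x) e^{i|φ(x)|² t}` of the dispersionless ODE
`i∂_t w + |w|²w = 0`. -/
noncomputable def odeSol (φ : ℝ → ℂ) (x t : ℝ) : ℂ :=
  φ x * Complex.exp (Complex.I * ((‖φ x‖^2 : ℝ) : ℂ) * (t : ℂ))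

open Complex Finset Filter
open scoped ComplexConjugate

noncomputable def expMode (n : ℤ) (x : ℝ) : ℂ :=
  exp (2 * π * I * n * x)

@[fun_prop]
lemma continuous_expMode (n : ℤ) : Continuous (expMode n) := by
  unfold expMode; fun_prop

lemma norm_expMode (n : ℤ) (x : ℝ) : ‖expMode n x‖ = 1 := by
  rw [expMode, show 2 * π * I * n * x = ((2 * π * n * x : ℝ) : ℂ) * I by push_cast; ring,
    norm_exp_ofReal_mul_I]

lemma expMode_mul_expMode (a b : ℤ) (x : ℝ) :
    expMode a x * expMode b x = expMode (a + b) x := by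
  rw [expMode, expMode, expMode, ← exp_add]; push_cast; ring_nf

lemma conj_expMode (n : ℤ) (x : ℝ) : conj (expMode n x) = expMode (-n) x := by
  rw [expMode, expMode, ← exp_conj]; simp [map_ofNat]

lemma integral_expMode (n : ℤ) :
    ∫ x in (0:ℝ)..1, expMode n x = if n = 0 then 1 else 0 := by
  split_ifs with hn
  · simp [expMode, hn]
  have hc : 2 * π * I * n ≠ 0 := by simp [Real.pi_ne_zero, hn]
  simp only [expMode]
  rw [integral_exp_mul_complex hc, ofReal_one, ofReal_zero, mul_zero, exp_zero, mul_one,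
    show 2 * π * I * n = n * (2 * π * I) by ring, exp_int_mul_two_pi_mul_I, sub_self, zero_div]

noncomputable def trigSum (S : Finset ℤ) (x : ℝ) : ℂ :=
  ∑ n ∈ S, expMode n x

@[fun_prop]
lemma continuous_trigSum (S : Finset ℤ) : Continuous (trigSum S) := by
  unfold trigSum; fun_prop

lemma norm_trigSum_le (S : Finset ℤ) (x : ℝ) : ‖trigSum S x‖ ≤ #S := by
  simpa [trigSum, norm_expMode] using norm_sum_le S (expMode · x)

lemma integral_trigSum (S : Finset ℤ) :
    ∫ x in (0:ℝ)..1, trigSum S x = if 0 ∈ S then 1 else 0 := by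
  simp only [trigSum]
  rw [intervalIntegral.integral_finsetSum fun n _ => (continuous_expMode n).intervalIntegrable _ _]
  simp_rw [integral_expMode]
  exact sum_ite_eq' S 0 fun _ => 1

lemma integral_sum_expMode {ι : Type*} (T : Finset ι) (g : ι → ℤ) :
    ∫ x in (0:ℝ)..1, ∑ i ∈ T, expMode (g i) x = #{i ∈ T | g i = 0} := by
  rw [intervalIntegral.integral_finsetSum fun i _ => (continuous_expMode _).intervalIntegrable _ _]
  simp_rw [integral_expMode]
  rw [sum_boole]

lemma trigSum_mul_conj (S : Finset ℤ) (x : ℝ) :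
    trigSum S x * conj (trigSum S x) = ∑ p ∈ S ×ˢ S, expMode (p.1 - p.2) x := by
  simp only [trigSum, map_sum, conj_expMode, sum_mul_sum, sum_product,
    expMode_mul_expMode, sub_eq_add_neg]

lemma trigSum_mul_trigSum_mul_conj (S : Finset ℤ) (x : ℝ) :
    trigSum S x * trigSum S x * conj (trigSum S x) =
      ∑ p ∈ S ×ˢ S ×ˢ S, expMode (p.1 + p.2.1 - p.2.2) x := by
  simp only [trigSum, map_sum, conj_expMode, sum_mul_sum, sum_product]
  simp only [sum_mul, expMode_mul_expMode, sub_eq_add_neg]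
  exact sum_congr rfl fun _ _ => sum_comm

def schurTripleCount (S : Finset ℤ) : ℕ :=
  #{p ∈ S ×ˢ S ×ˢ S | p.1 + p.2.1 = p.2.2}

lemma integral_norm_sq_trigSum (S : Finset ℤ) :
    ∫ x in (0:ℝ)..1, ‖trigSum S x‖ ^ 2 = #S := by
  apply Complex.ofReal_injective
  rw [← intervalIntegral.integral_ofReal]
  push_cast
  simp_rw [← mul_conj', trigSum_mul_conj]
  rw [integral_sum_expMode]
  simp_rw [sub_eq_zero]
  rw [← diag_eq_filter, diag_card]

lemma integral_norm_sq_mul_trigSum (S : Finset ℤ) :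
    ∫ x in (0:ℝ)..1, ((‖trigSum S x‖ ^ 2 : ℝ) : ℂ) * trigSum S x = schurTripleCount S := by
  have h (x : ℝ) : ((‖trigSum S x‖ ^ 2 : ℝ) : ℂ) * trigSum S x =
      trigSum S x * trigSum S x * conj (trigSum S x) := by
    push_cast; rw [← mul_conj']; ring
  simp_rw [h, trigSum_mul_trigSum_mul_conj]
  rw [integral_sum_expMode]
  simp_rw [sub_eq_zero]
  rfl

lemma norm_odeSol_sub_le {φ : ℝ → ℂ} {x M T : ℝ} (hM : ‖φ x‖ ≤ M) (hT : 0 ≤ T)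
    (hTM : T * M ^ 2 ≤ 1) :
    ‖odeSol φ x T - φ x - I * T * (((‖φ x‖ ^ 2 : ℝ) : ℂ) * φ x)‖ ≤ T ^ 2 * M ^ 3 * ‖φ x‖ ^ 2 := by
  set z : ℂ := I * ((‖φ x‖ ^ 2 : ℝ) : ℂ) * T
  have hz : ‖z‖ = ‖φ x‖ ^ 2 * T := by simp [z, abs_of_nonneg hT]
  have hφM : ‖φ x‖ ^ 2 ≤ M ^ 2 := pow_le_pow_left₀ (norm_nonneg _) hM 2
  have hz1 : ‖z‖ ≤ 1 := by rw [hz]; nlinarith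
  have hsplit : odeSol φ x T - φ x - I * T * (((‖φ x‖ ^ 2 : ℝ) : ℂ) * φ x) =
      φ x * (exp z - 1 - z) := by simp only [odeSol, z]; ring
  calc _ = ‖φ x‖ * ‖exp z - 1 - z‖ := by rw [hsplit, norm_mul]
    _ ≤ ‖φ x‖ * ‖z‖ ^ 2 := by gcongr; exact norm_exp_sub_one_sub_id_le hz1
    _ = T ^ 2 * (‖φ x‖ * ‖φ x‖ ^ 2) * ‖φ x‖ ^ 2 := by rw [hz]; ring
    _ ≤ T ^ 2 * (M * M ^ 2) * ‖φ x‖ ^ 2 := by gcongr; exact (norm_nonneg _).trans hM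
    _ = T ^ 2 * M ^ 3 * ‖φ x‖ ^ 2 := by ring

lemma norm_integral_odeSol_sub_le {φ : ℝ → ℂ} (hφ : Continuous φ) {a b M T : ℝ} (hab : a ≤ b)
    (hM : ∀ x, ‖φ x‖ ≤ M) (hT : 0 ≤ T) (hTM : T * M ^ 2 ≤ 1) :
    ‖(∫ x in a..b, odeSol φ x T) - (∫ x in a..b, φ x)
        - I * T * ∫ x in a..b, ((‖φ x‖ ^ 2 : ℝ) : ℂ) * φ x‖ ≤
      T ^ 2 * M ^ 3 * ∫ x in a..b, ‖φ x‖ ^ 2 := by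
  have hode : Continuous fun x => odeSol φ x T := by unfold odeSol; fun_prop
  have hlin : (∫ x in a..b, odeSol φ x T) - (∫ x in a..b, φ x)
      - I * T * ∫ x in a..b, ((‖φ x‖ ^ 2 : ℝ) : ℂ) * φ x
      = ∫ x in a..b, odeSol φ x T - φ x - I * T * (((‖φ x‖ ^ 2 : ℝ) : ℂ) * φ x) := by
    rw [intervalIntegral.integral_sub, intervalIntegral.integral_sub,
      intervalIntegral.integral_const_mul] <;>
    exact Continuous.intervalIntegrable (by fun_prop) _ _
  rw [hlin, ← intervalIntegral.integral_const_mul]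
  refine intervalIntegral.norm_integral_le_of_norm_le hab
    (Eventually.of_forall fun x _ => norm_odeSol_sub_le (hM x) hT hTM) ?_
  exact Continuous.intervalIntegrable (by fun_prop) _ _

lemma norm_integral_odeSol_trigSum_ge (S : Finset ℤ) (h0 : 0 ∉ S) {R T : ℝ} (hR : 0 ≤ R)
    (hT : 0 ≤ T) (hsmall : T * (R * #S) ^ 2 ≤ 1) :
    T * R ^ 3 * schurTripleCount S - T ^ 2 * R ^ 5 * (#S : ℝ) ^ 4 ≤
      ‖∫ x in (0:ℝ)..1, odeSol (fun x => R * trigSum S x) x T‖ := by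
  set φ : ℝ → ℂ := fun x => R * trigSum S x
  have hnorm (x : ℝ) : ‖φ x‖ = R * ‖trigSum S x‖ := by simp [φ, abs_of_nonneg hR]
  have hM (x : ℝ) : ‖φ x‖ ≤ R * #S := by
    rw [hnorm]; exact mul_le_mul_of_nonneg_left (norm_trigSum_le S x) hR
  have hmean : ∫ x in (0:ℝ)..1, φ x = 0 := by
    simp [φ, intervalIntegral.integral_const_mul, integral_trigSum, h0]
  have hcubic : ∫ x in (0:ℝ)..1, ((‖φ x‖ ^ 2 : ℝ) : ℂ) * φ x = R ^ 3 * schurTripleCount S := by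
    simp_rw [hnorm, ← integral_norm_sq_mul_trigSum, ← intervalIntegral.integral_const_mul, φ]
    congr 1 with x
    push_cast; ring
  have hL2 : ∫ x in (0:ℝ)..1, ‖φ x‖ ^ 2 = R ^ 2 * #S := by
    simp_rw [hnorm, mul_pow, intervalIntegral.integral_const_mul, integral_norm_sq_trigSum]
  have key := norm_integral_odeSol_sub_le (φ := φ) (by fun_prop) zero_le_one hM hT hsmall
  rw [hmean, hcubic, hL2, sub_zero] at key
  have hmain : ‖I * T * (R ^ 3 * schurTripleCount S)‖ = T * R ^ 3 * schurTripleCount S := by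
    rw [show I * T * (R ^ 3 * schurTripleCount S) = I * ((T * R ^ 3 * schurTripleCount S : ℝ) : ℂ)
      by push_cast; ring, norm_mul, norm_I, one_mul, Complex.norm_of_nonneg (by positivity)]
  have htri := norm_sub_norm_le (I * T * (R ^ 3 * schurTripleCount S))
    (∫ x in (0:ℝ)..1, odeSol φ x T)
  rw [norm_sub_rev, hmain] at htri
  linarith

noncomputable def intBall (c r : ℝ) : Finset ℤ :=
  Icc ⌈c - r⌉ ⌊c + r⌋

lemma mem_intBall {c r : ℝ} {n : ℤ} : n ∈ intBall c r ↔ |(n : ℝ) - c| ≤ r := by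
  rw [intBall, mem_Icc, Int.ceil_le, Int.le_floor, abs_sub_le_iff]
  constructor <;> rintro ⟨h₁, h₂⟩ <;> constructor <;> linarith

lemma add_mem_intBall {c c' r r' : ℝ} {a b : ℤ} (ha : a ∈ intBall c r) (hb : b ∈ intBall c' r') :
    a + b ∈ intBall (c + c') (r + r') := by
  rw [mem_intBall] at *
  calc |((a + b : ℤ) : ℝ) - (c + c')| = |((a : ℝ) - c) + ((b : ℝ) - c')| := by push_cast; ring_nf
    _ ≤ r + r' := (abs_add_le _ _).trans (add_le_add ha hb)

lemma card_intBall_eq_max (c r : ℝ) :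
    (#(intBall c r) : ℝ) = max ((⌊c + r⌋ + 1 - ⌈c - r⌉ : ℤ) : ℝ) 0 := by
  rw [intBall, Int.card_Icc, ← Int.cast_natCast (R := ℝ), Int.toNat_eq_max]
  push_cast; rfl

lemma card_intBall_le {c r : ℝ} (hr : 0 ≤ r) : (#(intBall c r) : ℝ) ≤ 2 * r + 1 := by
  rw [card_intBall_eq_max]
  push_cast
  exact max_le (by linarith [Int.floor_le (c + r), Int.le_ceil (c - r)]) (by linarith)

lemma two_mul_sub_one_le_card_intBall (c r : ℝ) : 2 * r - 1 ≤ (#(intBall c r) : ℝ) := by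
  rw [card_intBall_eq_max]
  push_cast
  exact le_max_of_le_left
    (by linarith [Int.lt_floor_add_one (c + r), Int.ceil_lt_add_one (c - r)])

lemma card_sq_le_schurTripleCount {I S : Finset ℤ} (hI : I ⊆ S)
    (hII : ∀ a ∈ I, ∀ b ∈ I, a + b ∈ S) : #I ^ 2 ≤ schurTripleCount S := by
  rw [sq, ← card_product, schurTripleCount]
  refine card_le_card_of_injOn (fun p => (p.1, p.2, p.1 + p.2)) (fun p hp => ?_) ?_
  · simp only [coe_product, Set.mem_prod, mem_coe] at hp
    simp [hI hp.1, hI hp.2, hII _ hp.1 _ hp.2]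
  · intro p _ q _ h
    simp only [Prod.mk.injEq] at h
    exact Prod.ext h.1 h.2.1

noncomputable def packetSupport (A N : ℝ) : Finset ℤ :=
  intBall N (A / 2) ∪ intBall (2 * N) (A / 2)

lemma phiPacket_eq_mul_trigSum (R A N : ℝ) :
    phiPacket R A N = fun x => R * trigSum (packetSupport A N) x := by
  have hmem (n : ℤ) : n ∈ packetSupport A N ↔ |(n:ℝ) - N| ≤ A/2 ∨ |(n:ℝ) - 2*N| ≤ A/2 := by
    rw [packetSupport, mem_union, mem_intBall, mem_intBall]
  funext x
  rw [phiPacket, trigSum,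
    tsum_eq_sum (s := packetSupport A N) fun n hn => if_neg (mt (hmem n).2 hn)]
  exact congrArg _ (sum_congr rfl fun n hn => if_pos ((hmem n).1 hn))

lemma zero_notMem_packetSupport {A N : ℝ} (hAN : A < 2 * N) : 0 ∉ packetSupport A N := by
  simp only [packetSupport, mem_union, mem_intBall, Int.cast_zero, zero_sub, abs_neg, not_or,
    not_le]
  constructor <;> cases abs_cases N <;> cases abs_cases (2 * N) <;> linarith

lemma card_packetSupport_le {A : ℝ} (hA : 0 ≤ A) (N : ℝ) :
    (#(packetSupport A N) : ℝ) ≤ 2 * A + 2 := by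
  have hA2 : 0 ≤ A / 2 := by positivity
  have hunion : (#(packetSupport A N) : ℝ) ≤
      #(intBall N (A / 2)) + #(intBall (2 * N) (A / 2)) := by
    exact_mod_cast card_union_le _ _
  linarith [card_intBall_le (c := N) hA2, card_intBall_le (c := 2 * N) hA2]

lemma fourierCoeff1_zero (f : ℝ → ℂ) : fourierCoeff1 f 0 = ∫ x in (0:ℝ)..1, f x := by
  simp [fourierCoeff1]

lemma norm_fourierCoeff1_zero_le (f : ℝ → ℂ) (s : ℝ) {N : ℕ} (hN : 0 < N) :
    ‖fourierCoeff1 f 0‖ ≤ √(∑' n : ℤ,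
      if |n| < (N : ℤ) then ((1:ℝ) + (n:ℝ)^2) ^ s * ‖fourierCoeff1 f n‖^2 else 0) := by
  refine Real.le_sqrt_of_sq_le ?_
  have hsum : Summable fun n : ℤ =>
      if |n| < (N : ℤ) then ((1:ℝ) + (n:ℝ)^2) ^ s * ‖fourierCoeff1 f n‖^2 else 0 := by
    refine summable_of_ne_finset_zero (s := Ioo (-(N:ℤ)) N) fun n hn => if_neg ?_
    rwa [mem_Ioo, ← abs_lt] at hn
  refine le_of_eq_of_le ?_ (hsum.le_tsum 0 fun n _ => by positivity)
  simp [hN]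

lemma norm_integral_odeSol_phiPacket_ge {R A T : ℝ} {N : ℕ} (hR : 0 ≤ R) (hT : 0 ≤ T)
    (hA : 0 ≤ A) (hAN : A < 2 * N) (hTRA : T * R ^ 2 * A ^ 2 ≤ 1 / 3200)
    (hTR : T * R ^ 2 ≤ 1 / 3200) :
    T * R ^ 3 * A ^ 2 / 32 ≤ ‖∫ x in (0:ℝ)..1, odeSol (phiPacket R A N) x T‖ := by
  set S := packetSupport A N
  set I := intBall N (A / 4)
  have hIS : I ⊆ S := fun n hn => mem_union_left _ <| mem_intBall.2 <|
    (mem_intBall.1 hn).trans (by linarith)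
  have hIIS : ∀ a ∈ I, ∀ b ∈ I, a + b ∈ S := fun a ha b hb => mem_union_right _ <| by
    convert add_mem_intBall ha hb using 2 <;> ring
  have hk : (1 : ℝ) ≤ #I := by
    have hN : (N : ℤ) ∈ I :=
      mem_intBall.2 (by simp only [Int.cast_natCast, sub_self, abs_zero]; positivity)
    exact_mod_cast card_pos.2 ⟨_, hN⟩
  have hkA := two_mul_sub_one_le_card_intBall (N : ℝ) (A / 4)
  have hm := card_packetSupport_le hA (N : ℝ)
  have hq : (#I : ℝ) ^ 2 ≤ schurTripleCount S := by
    exact_mod_cast card_sq_le_schurTripleCount hIS hIIS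
  -- `#S ≤ 10 #I` is what makes the Taylor remainder `T² R⁵ #S⁴` at most half the main term
  have hmk : (#S : ℝ) ≤ 10 * #I := by linarith
  have hsmall : T * R ^ 2 * (#S : ℝ) ^ 2 ≤ 1 / 200 := by
    have hm2 : (#S : ℝ) ^ 2 ≤ 8 * A ^ 2 + 8 := by nlinarith [sq_nonneg (A - 1)]
    nlinarith [mul_le_mul_of_nonneg_left hm2 (by positivity : 0 ≤ T * R ^ 2)]
  have hrem : T * R ^ 2 * (#S : ℝ) ^ 4 ≤ schurTripleCount S / 2 := by
    have hm2 : (#S : ℝ) ^ 2 ≤ 100 * #I ^ 2 := by nlinarith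
    nlinarith [mul_le_mul_of_nonneg_left hm2 (by positivity : 0 ≤ T * R ^ 2)]
  have key := norm_integral_odeSol_trigSum_ge S (zero_notMem_packetSupport hAN) hR hT
    (by nlinarith)
  rw [← phiPacket_eq_mul_trigSum] at key
  have hTR3 : 0 ≤ T * R ^ 3 := by positivity
  have hAq : A ^ 2 / 32 ≤ schurTripleCount S / 2 := by nlinarith
  calc T * R ^ 3 * A ^ 2 / 32 = T * R ^ 3 * (A ^ 2 / 32) := by ring
    _ ≤ T * R ^ 3 * (schurTripleCount S / 2) := mul_le_mul_of_nonneg_left hAq hTR3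
    _ ≤ T * R ^ 3 * schurTripleCount S - T * R ^ 3 * (T * R ^ 2 * (#S : ℝ) ^ 4) := by
        nlinarith [mul_le_mul_of_nonneg_left hrem hTR3]
    _ ≤ _ := by convert key using 1; ring

lemma eventually_natCast_rpow_neg_lt {y δ : ℝ} (hy : 0 < y) (hδ : 0 < δ) :
    ∀ᶠ N : ℕ in atTop, (N : ℝ) ^ (-y) < δ :=
  ((tendsto_rpow_neg_atTop hy).comp tendsto_natCast_atTop_atTop).eventually_lt_const hδ

lemma rpow_mul_rpow_pow {x : ℝ} (hx : 0 < x) (a b : ℝ) (k : ℕ) :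
    x ^ a * (x ^ b) ^ k = x ^ (a + b * k) := by
  rw [Real.rpow_add hx, Real.rpow_mul_natCast hx.le]

theorem ode_high_to_low_supercritical_general (s θ : ℝ) (hθ : 0 < θ) :
    ∃ c : ℝ, 0 < c ∧ ∃ N₀ : ℕ, ∀ N : ℕ, N₀ ≤ N →
      ∀ R A T : ℝ,
        R = (N:ℝ) ^ (-(1/2) - s) → A = (N:ℝ) ^ (1 - θ) → T = (N:ℝ) ^ (2*s - 1 - θ) →
        c * (N:ℝ) ^ (-(1/2) - s - 3*θ) ≤
          Real.sqrt (∑' n : ℤ,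
            if |n| < (N : ℤ) then
              ((1:ℝ) + (n:ℝ)^2) ^ s *
                ‖fourierCoeff1 (fun x => odeSol (phiPacket R A (N:ℝ)) x T) n‖^2
            else 0) := by
  have hδ : (0 : ℝ) < 1 / 3200 := by norm_num
  obtain ⟨N₀, hN₀⟩ := eventually_atTop.1 <|
    ((eventually_natCast_rpow_neg_lt (by linarith : 0 < 3 * θ) hδ).and
      (eventually_natCast_rpow_neg_lt (by linarith : 0 < 2 + θ) hδ)).and (eventually_ge_atTop 1)
  refine ⟨1 / 32, by norm_num, N₀, fun N hN R A T hR hA hT => ?_⟩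
  obtain ⟨⟨hN3θ, hN2θ⟩, hN1⟩ := hN₀ N hN
  have hN : (1 : ℝ) ≤ N := by exact_mod_cast hN1
  have hNpos : (0 : ℝ) < N := by positivity
  have hTR : T * R ^ 2 = (N : ℝ) ^ (-(2 + θ)) := by
    rw [hT, hR, rpow_mul_rpow_pow hNpos]; congr 1; push_cast; ring
  have hTRA : T * R ^ 2 * A ^ 2 = (N : ℝ) ^ (-(3 * θ)) := by
    rw [hTR, hA, rpow_mul_rpow_pow hNpos]; congr 1; push_cast; ring
  have hTR3A : T * R ^ 3 * A ^ 2 = (N : ℝ) ^ (-(1/2) - s - 3*θ) := by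
    rw [hT, hR, hA, rpow_mul_rpow_pow hNpos, rpow_mul_rpow_pow hNpos]; congr 1; push_cast; ring
  have hAN : A < 2 * N := by
    rw [hA]
    calc (N : ℝ) ^ (1 - θ) ≤ (N : ℝ) ^ (1 : ℝ) := Real.rpow_le_rpow_of_exponent_le hN (by linarith)
      _ < 2 * N := by rw [Real.rpow_one]; linarith
  calc 1 / 32 * (N : ℝ) ^ (-(1/2) - s - 3*θ) = T * R ^ 3 * A ^ 2 / 32 := by rw [hTR3A]; ring
    _ ≤ ‖∫ x in (0:ℝ)..1, odeSol (phiPacket R A N) x T‖ := by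
        refine norm_integral_odeSol_phiPacket_ge (by rw [hR]; positivity) (by rw [hT]; positivity)
          (by rw [hA]; positivity) hAN (by rw [hTRA]; exact hN3θ.le) (by rw [hTR]; exact hN2θ.le)
    _ = ‖fourierCoeff1 (fun x => odeSol (phiPacket R A N) x T) 0‖ := by rw [fourierCoeff1_zero]
    _ ≤ _ := norm_fourierCoeff1_zero_le _ s hN1

/-- High-to-low energy transfer for the dispersionless ODE for `s < −1/2`:
with `R = N^{−1/2−s}`, `A = N^{1−θ}` and `T_N = N^{2s−1−θ}`, the low frequency
part of `w(T_N)` has `H^s` norm at least `c N^{−1/2−s−3θ}`. -/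
theorem ode_high_to_low_supercritical (s θ : ℝ) (hs : s < -(1/2)) (hθ : 0 < θ)
    (hsθ : s < -(1/2) - 3*θ) :
    ∃ c : ℝ, 0 < c ∧ ∃ N₀ : ℕ, ∀ N : ℕ, N₀ ≤ N →
      ∀ R A T : ℝ,
        R = (N:ℝ) ^ (-(1/2) - s) → A = (N:ℝ) ^ (1 - θ) → T = (N:ℝ) ^ (2*s - 1 - θ) →
        c * (N:ℝ) ^ (-(1/2) - s - 3*θ) ≤
          Real.sqrt (∑' n : ℤ,
            if |n| < (N : ℤ) then
              ((1:ℝ) + (n:ℝ)^2) ^ s *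
                ‖fourierCoeff1 (fun x => odeSol (phiPacket R A (N:ℝ)) x T) n‖^2
            else 0) :=
  ode_high_to_low_supercritical_general s θ hθ
end

section
/- There exist universal constants c > 0 and C > 0 such that the following holds. Let φ : ℝ → ℂ be a 1-periodic continuous function with M := Σ_{n∈ℤ} |φ̂(n)| < ∞, and let w(x,t) = φ(x) e^{i|φ(x)|² t}. Then for every t with 0 ≤ t ≤ c M^{−2}, one has Σ_{n∈ℤ} |ŵ(n,t)| ≤ C M and sup_{n∈ℤ} |ŵ(n,t)| ≤ C sup_{n∈ℤ} |φ̂(n)|, where ŵ(n,t) = ∫₀¹ w(x,t) e^{−2πinx} dx. -/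
open scoped Real

/-!
The Fourier coefficients of a product are the convolution of the coefficient sequences, so
`‖fg‖_{FL¹} ≤ ‖f‖_{FL¹} ‖g‖_{FL¹}` and `‖fg‖_{FL^∞} ≤ ‖f‖_{FL^∞} ‖g‖_{FL¹}`. Expanding
`w(t) = Σ_k (it)^k / k! · φ (φ φ̄)^k` and estimating termwise gives
`‖w(t)‖_{FL¹} ≤ M e^{|t| M²}` and `‖w(t)‖_{FL^∞} ≤ ‖φ‖_{FL^∞} e^{|t| M²}`, and `e^{|t| M²} ≤ e`
as long as `t ≤ M⁻²`.
-/

section DoubleSeries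

variable {ι κ E : Type*} [NormedAddCommGroup E] {c : ι → κ → E}

theorem summable_norm_uncurry_of_summable_tsum_norm (hc : ∀ k, Summable fun n => ‖c k n‖)
    (hs : Summable fun k => ∑' n, ‖c k n‖) : Summable fun p : ι × κ => ‖c p.1 p.2‖ :=
  (summable_prod_of_nonneg fun _ => norm_nonneg _).2 ⟨hc, hs⟩

theorem summable_norm_tsum_of_summable_tsum_norm (hc : ∀ k, Summable fun n => ‖c k n‖)
    (hs : Summable fun k => ∑' n, ‖c k n‖) : Summable fun n => ‖∑' k, c k n‖ :=
  have hN := summable_norm_uncurry_of_summable_tsum_norm hc hs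
  hN.prod_symm.prod.of_nonneg_of_le (fun _ => norm_nonneg _)
    fun n => norm_tsum_le_tsum_norm (hN.prod_symm.prod_factor n)

theorem tsum_norm_tsum_le_tsum_tsum_norm (hc : ∀ k, Summable fun n => ‖c k n‖)
    (hs : Summable fun k => ∑' n, ‖c k n‖) : ∑' n, ‖∑' k, c k n‖ ≤ ∑' k, ∑' n, ‖c k n‖ := by
  have hN := summable_norm_uncurry_of_summable_tsum_norm hc hs
  calc ∑' n, ‖∑' k, c k n‖ ≤ ∑' n, ∑' k, ‖c k n‖ :=
        (summable_norm_tsum_of_summable_tsum_norm hc hs).tsum_le_tsum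
          (fun n => norm_tsum_le_tsum_norm (hN.prod_symm.prod_factor n)) hN.prod_symm.prod
    _ = ∑' k, ∑' n, ‖c k n‖ := hN.tsum_comm

theorem hasSum_tsum_of_summable_tsum_norm [CompleteSpace E] (hc : ∀ k, Summable fun n => ‖c k n‖)
    (hs : Summable fun k => ∑' n, ‖c k n‖) :
    HasSum (fun n => ∑' k, c k n) (∑' k, ∑' n, c k n) := by
  have h := (summable_norm_uncurry_of_summable_tsum_norm hc hs).of_norm
  exact h.tsum_comm ▸ h.prod_symm.prod.hasSum

end DoubleSeries

noncomputable def discreteConv {G R : Type*} [AddCommGroup G] [NormedRing R] (a b : G → R)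
    (n : G) : R :=
  ∑' m, a m * b (n - m)

section DiscreteConv

variable {G R : Type*} [AddCommGroup G] [NormedRing R] {a b : G → R}

theorem summable_norm_mul_comp_sub (hb : Summable fun n => ‖b n‖) (m : G) :
    Summable fun n => ‖a m * b (n - m)‖ :=
  (((Equiv.subRight m).summable_iff.2 hb).mul_left ‖a m‖).of_nonneg_of_le
    (fun _ => norm_nonneg _) fun _ => norm_mul_le _ _

theorem tsum_norm_mul_comp_sub_le (hb : Summable fun n => ‖b n‖) (m : G) :
    ∑' n, ‖a m * b (n - m)‖ ≤ ‖a m‖ * ∑' n, ‖b n‖ := by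
  rw [← (Equiv.subRight m).tsum_eq (‖b ·‖), ← tsum_mul_left]
  exact (summable_norm_mul_comp_sub hb m).tsum_le_tsum (fun _ => norm_mul_le _ _)
    (((Equiv.subRight m).summable_iff.2 hb).mul_left ‖a m‖)

theorem summable_tsum_norm_mul_comp_sub (ha : Summable fun n => ‖a n‖)
    (hb : Summable fun n => ‖b n‖) : Summable fun m => ∑' n, ‖a m * b (n - m)‖ :=
  (ha.mul_right _).of_nonneg_of_le (fun _ => tsum_nonneg fun _ => norm_nonneg _)
    (tsum_norm_mul_comp_sub_le hb)

theorem summable_norm_discreteConv (ha : Summable fun n => ‖a n‖)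
    (hb : Summable fun n => ‖b n‖) : Summable fun n => ‖discreteConv a b n‖ :=
  summable_norm_tsum_of_summable_tsum_norm (summable_norm_mul_comp_sub hb)
    (summable_tsum_norm_mul_comp_sub ha hb)

theorem tsum_norm_discreteConv_le (ha : Summable fun n => ‖a n‖)
    (hb : Summable fun n => ‖b n‖) :
    ∑' n, ‖discreteConv a b n‖ ≤ (∑' n, ‖a n‖) * ∑' n, ‖b n‖ :=
  calc ∑' n, ‖discreteConv a b n‖ ≤ ∑' m, ∑' n, ‖a m * b (n - m)‖ :=
        tsum_norm_tsum_le_tsum_tsum_norm (summable_norm_mul_comp_sub hb)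
          (summable_tsum_norm_mul_comp_sub ha hb)
    _ ≤ ∑' m, ‖a m‖ * ∑' n, ‖b n‖ :=
        (summable_tsum_norm_mul_comp_sub ha hb).tsum_le_tsum (tsum_norm_mul_comp_sub_le hb)
          (ha.mul_right _)
    _ = (∑' n, ‖a n‖) * ∑' n, ‖b n‖ := tsum_mul_right

theorem hasSum_discreteConv [CompleteSpace R] (ha : Summable fun n => ‖a n‖)
    (hb : Summable fun n => ‖b n‖) : HasSum (discreteConv a b) ((∑' n, a n) * ∑' n, b n) := by
  have hshift : ∀ m, ∑' n, a m * b (n - m) = a m * ∑' n, b n := fun m => by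
    have hb' : Summable fun n => b (n - m) := (Equiv.subRight m).summable_iff.2 hb.of_norm
    rw [hb'.tsum_mul_left]
    exact congrArg _ ((Equiv.subRight m).tsum_eq b)
  have := hasSum_tsum_of_summable_tsum_norm (c := fun m n => a m * b (n - m))
    (summable_norm_mul_comp_sub hb) (summable_tsum_norm_mul_comp_sub ha hb)
  rwa [tsum_congr hshift, ha.of_norm.tsum_mul_right] at this

theorem norm_discreteConv_le_iSup_mul (ha : Summable fun n => ‖a n‖)
    (hb : Summable fun n => ‖b n‖) (n : G) :
    ‖discreteConv a b n‖ ≤ (⨆ m, ‖a m‖) * ∑' m, ‖b m‖ := by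
  have hb' : Summable fun m => ‖b (n - m)‖ := (Equiv.subLeft n).summable_iff.2 hb
  have hle : ∀ m, ‖a m * b (n - m)‖ ≤ (⨆ m, ‖a m‖) * ‖b (n - m)‖ := fun m =>
    (norm_mul_le _ _).trans (mul_le_mul_of_nonneg_right
      (le_ciSup ha.tendsto_cofinite_zero.bddAbove_range_of_cofinite m) (norm_nonneg _))
  have hsum : Summable fun m => ‖a m * b (n - m)‖ :=
    (hb'.mul_left _).of_nonneg_of_le (fun _ => norm_nonneg _) hle
  calc ‖discreteConv a b n‖ ≤ ∑' m, ‖a m * b (n - m)‖ := norm_tsum_le_tsum_norm hsum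
    _ ≤ ∑' m, (⨆ m, ‖a m‖) * ‖b (n - m)‖ := hsum.tsum_le_tsum hle (hb'.mul_left _)
    _ = (⨆ m, ‖a m‖) * ∑' m, ‖b m‖ := by
        rw [tsum_mul_left]
        exact congrArg _ ((Equiv.subLeft n).tsum_eq (‖b ·‖))

theorem summable_norm_iterate_discreteConv (ha : Summable fun n => ‖a n‖)
    (hb : Summable fun n => ‖b n‖) (k : ℕ) :
    Summable fun n => ‖(discreteConv · b)^[k] a n‖ := by
  induction k with
  | zero => exact ha
  | succ k ih =>
    rw [Function.iterate_succ_apply']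
    exact summable_norm_discreteConv ih hb

theorem tsum_norm_iterate_discreteConv_le (ha : Summable fun n => ‖a n‖)
    (hb : Summable fun n => ‖b n‖) (k : ℕ) :
    ∑' n, ‖(discreteConv · b)^[k] a n‖ ≤ (∑' n, ‖a n‖) * (∑' n, ‖b n‖) ^ k := by
  induction k with
  | zero => simp
  | succ k ih =>
    rw [Function.iterate_succ_apply', pow_succ, ← mul_assoc]
    exact (tsum_norm_discreteConv_le (summable_norm_iterate_discreteConv ha hb k) hb).trans
      (mul_le_mul_of_nonneg_right ih (tsum_nonneg fun _ => norm_nonneg _))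

theorem norm_iterate_discreteConv_le (ha : Summable fun n => ‖a n‖)
    (hb : Summable fun n => ‖b n‖) (k : ℕ) (n : G) :
    ‖(discreteConv · b)^[k] a n‖ ≤ (⨆ m, ‖a m‖) * (∑' m, ‖b m‖) ^ k := by
  induction k generalizing n with
  | zero =>
    simpa using le_ciSup ha.tendsto_cofinite_zero.bddAbove_range_of_cofinite n
  | succ k ih =>
    rw [Function.iterate_succ_apply', pow_succ, ← mul_assoc]
    exact (norm_discreteConv_le_iSup_mul (summable_norm_iterate_discreteConv ha hb k) hb n).trans
      (mul_le_mul_of_nonneg_right (ciSup_le ih) (tsum_nonneg fun _ => norm_nonneg _))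

end DiscreteConv

theorem norm_fourier_apply {T : ℝ} (n : ℤ) (x : AddCircle T) : ‖fourier n x‖ = 1 := by
  rw [fourier_apply, Circle.norm_coe]

theorem summable_norm_mul_fourier {T : ℝ} {a : ℤ → ℂ} (ha : Summable fun n => ‖a n‖)
    (x : AddCircle T) : Summable fun n => ‖a n * fourier n x‖ := by
  simpa only [norm_mul, norm_fourier_apply, mul_one] using ha

def HasAbsFourierSeries (T : ℝ) (f : ℝ → ℂ) (a : ℤ → ℂ) : Prop :=
  Summable (fun n => ‖a n‖) ∧ ∀ x : ℝ, HasSum (fun n => a n * fourier n (x : AddCircle T)) (f x)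

namespace HasAbsFourierSeries

variable {T : ℝ} {f g : ℝ → ℂ} {a b : ℤ → ℂ}

theorem const_mul (hf : HasAbsFourierSeries T f a) (c : ℂ) :
    HasAbsFourierSeries T (fun x => c * f x) (fun n => c * a n) :=
  ⟨by simpa only [norm_mul] using hf.1.mul_left ‖c‖,
    fun x => by simpa only [mul_assoc] using (hf.2 x).mul_left c⟩

theorem star (hf : HasAbsFourierSeries T f a) :
    HasAbsFourierSeries T (fun x => star (f x)) (fun n => star (a (-n))) := by
  refine ⟨by simpa only [norm_star, Function.comp_def] using hf.1.comp_injective neg_injective,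
    fun x => ?_⟩
  have h := (Equiv.neg ℤ).hasSum_iff.2 (hf.2 x).star
  convert h using 2 with n
  simp only [Function.comp_apply, Equiv.neg_apply, star_mul', fourier_neg, starRingEnd_apply,
    star_star]

theorem mul (hf : HasAbsFourierSeries T f a) (hg : HasAbsFourierSeries T g b) :
    HasAbsFourierSeries T (fun x => f x * g x) (discreteConv a b) := by
  refine ⟨summable_norm_discreteConv hf.1 hg.1, fun x => ?_⟩
  have h := hasSum_discreteConv (summable_norm_mul_fourier hf.1 (x : AddCircle T))
    (summable_norm_mul_fourier hg.1 (x : AddCircle T))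
  have hconv : ∀ n, discreteConv (fun n => a n * fourier n (x : AddCircle T))
      (fun n => b n * fourier n (x : AddCircle T)) n
        = discreteConv a b n * fourier n (x : AddCircle T) := fun n => by
    simp only [discreteConv, ← tsum_mul_right]
    congr 1
    funext m
    rw [show fourier n (x : AddCircle T) = fourier m x * fourier (n - m) x by
      rw [← fourier_add, add_sub_cancel]]
    ring
  rwa [(hf.2 x).tsum_eq, (hg.2 x).tsum_eq, funext hconv] at h


theorem mul_pow (hf : HasAbsFourierSeries T f a) (hg : HasAbsFourierSeries T g b) (k : ℕ) :
    HasAbsFourierSeries T (fun x => f x * g x ^ k) ((discreteConv · b)^[k] a) := by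
  induction k with
  | zero => simpa using hf
  | succ k ih =>
    rw [Function.iterate_succ_apply']
    simpa only [pow_succ, mul_assoc] using ih.mul hg

theorem of_hasSum {ι : Type*} {f : ι → ℝ → ℂ} {c : ι → ℤ → ℂ} {F : ℝ → ℂ}
    (h : ∀ k, HasAbsFourierSeries T (f k) (c k)) (hs : Summable fun k => ∑' n, ‖c k n‖)
    (hF : ∀ x, HasSum (fun k => f k x) (F x)) :
    HasAbsFourierSeries T F (fun n => ∑' k, c k n) := by
  refine ⟨summable_norm_tsum_of_summable_tsum_norm (fun k => (h k).1) hs, fun x => ?_⟩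
  have hnorm : ∀ k n, ‖c k n * fourier n (x : AddCircle T)‖ = ‖c k n‖ := fun k n => by
    rw [norm_mul, norm_fourier_apply, mul_one]
  have h2 := hasSum_tsum_of_summable_tsum_norm
    (c := fun k n => c k n * fourier n (x : AddCircle T))
    (by simpa only [hnorm] using fun k => (h k).1) (by simpa only [hnorm] using hs)
  simp only [((h _).2 x).tsum_eq, tsum_mul_right] at h2
  exact (hF x).tsum_eq ▸ h2


theorem exists_of_hasSum_mul_pow (hf : HasAbsFourierSeries T f a)
    (hg : HasAbsFourierSeries T g b) {z : ℕ → ℂ}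
    (hz : Summable fun k => ‖z k‖ * (∑' n, ‖b n‖) ^ k) {F : ℝ → ℂ}
    (hF : ∀ x, HasSum (fun k => z k * (f x * g x ^ k)) (F x)) :
    ∃ c, HasAbsFourierSeries T F c ∧
      ∑' n, ‖c n‖ ≤ (∑' n, ‖a n‖) * ∑' k, ‖z k‖ * (∑' n, ‖b n‖) ^ k ∧
      ∀ n, ‖c n‖ ≤ (⨆ m, ‖a m‖) * ∑' k, ‖z k‖ * (∑' n, ‖b n‖) ^ k := by
  set c : ℕ → ℤ → ℂ := fun k n => z k * (discreteConv · b)^[k] a n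
  have hc : ∀ k, HasAbsFourierSeries T (fun x => z k * (f x * g x ^ k)) (c k) := fun k =>
    (hf.mul_pow hg k).const_mul (z k)
  have hrow : ∀ k, ∑' n, ‖c k n‖ ≤ (∑' n, ‖a n‖) * (‖z k‖ * (∑' n, ‖b n‖) ^ k) := fun k => by
    simp only [c, norm_mul, tsum_mul_left]
    rw [mul_left_comm]
    exact mul_le_mul_of_nonneg_left (tsum_norm_iterate_discreteConv_le hf.1 hg.1 k)
      (norm_nonneg _)
  have hentry : ∀ k n, ‖c k n‖ ≤ (⨆ m, ‖a m‖) * (‖z k‖ * (∑' n, ‖b n‖) ^ k) := fun k n => by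
    simp only [c, norm_mul]
    rw [mul_left_comm]
    exact mul_le_mul_of_nonneg_left (norm_iterate_discreteConv_le hf.1 hg.1 k n) (norm_nonneg _)
  have hs : Summable fun k => ∑' n, ‖c k n‖ :=
    (hz.mul_left _).of_nonneg_of_le (fun _ => tsum_nonneg fun _ => norm_nonneg _) hrow
  refine ⟨_, of_hasSum hc hs hF, ?_, fun n => ?_⟩
  · calc ∑' n, ‖∑' k, c k n‖ ≤ ∑' k, ∑' n, ‖c k n‖ :=
          tsum_norm_tsum_le_tsum_tsum_norm (fun k => (hc k).1) hs
      _ ≤ ∑' k, (∑' n, ‖a n‖) * (‖z k‖ * (∑' n, ‖b n‖) ^ k) :=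
          hs.tsum_le_tsum hrow (hz.mul_left _)
      _ = _ := tsum_mul_left
  · have hcol : Summable fun k => ‖c k n‖ :=
      (hz.mul_left _).of_nonneg_of_le (fun _ => norm_nonneg _) (hentry · n)
    calc ‖∑' k, c k n‖ ≤ ∑' k, ‖c k n‖ := norm_tsum_le_tsum_norm hcol
      _ ≤ ∑' k, (⨆ m, ‖a m‖) * (‖z k‖ * (∑' n, ‖b n‖) ^ k) :=
          hcol.tsum_le_tsum (hentry · n) (hz.mul_left _)
      _ = _ := tsum_mul_left

end HasAbsFourierSeries

theorem fourierCoeff1_eq_integral_fourier (f : ℝ → ℂ) (n : ℤ) :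
    fourierCoeff1 f n = ∫ x in (0:ℝ)..1, fourier (-n) (x : AddCircle (1 : ℝ)) * f x := by
  refine intervalIntegral.integral_congr fun x _ => ?_
  simp only [fourier_coe_apply, mul_comm (f x)]
  congr 2
  push_cast
  ring

theorem HasAbsFourierSeries.fourierCoeff1_eq {f : ℝ → ℂ} {a : ℤ → ℂ}
    (h : HasAbsFourierSeries 1 f a) : fourierCoeff1 f = a := by
  have : Fact ((0 : ℝ) < 1) := ⟨one_pos⟩
  funext n
  have hcont : ∀ m : ℤ, Continuous fun x : ℝ => fourier m (x : AddCircle (1 : ℝ)) := fun m =>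
    (fourier m).continuous.comp continuous_quotient_mk'
  have horth : ∀ m : ℤ, ∫ x in (0 : ℝ)..1,
      fourier (-n) (x : AddCircle (1 : ℝ)) * (a m * fourier m (x : AddCircle (1 : ℝ)))
        = if m = n then a n else 0 := fun m => by
    have h := congrFun (fourierCoeff_fourier (T := 1) m) n
    rw [fourierCoeff_eq_intervalIntegral _ n 0, zero_add, div_one, one_smul] at h
    simp only [smul_eq_mul] at h
    simp_rw [mul_left_comm _ (a m)]
    rw [intervalIntegral.integral_const_mul, h, Pi.single_apply]
    rcases eq_or_ne m n with rfl | hmn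
    · simp
    · simp [hmn, hmn.symm]
  have hsum : HasSum (fun m => ∫ x in (0 : ℝ)..1,
      fourier (-n) (x : AddCircle (1 : ℝ)) * (a m * fourier m (x : AddCircle (1 : ℝ))))
      (∫ x in (0 : ℝ)..1, fourier (-n) (x : AddCircle (1 : ℝ)) * f x) :=
    intervalIntegral.hasSum_integral_of_dominated_convergence (fun m _ => ‖a m‖)
    (fun m => ((hcont (-n)).mul (continuous_const.mul (hcont m))).aestronglyMeasurable)
    (fun m => Filter.Eventually.of_forall fun x _ => by
      rw [norm_mul, norm_mul, norm_fourier_apply, norm_fourier_apply, one_mul, mul_one])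
    (Filter.Eventually.of_forall fun _ _ => h.1) intervalIntegrable_const
    (Filter.Eventually.of_forall fun x _ => (h.2 x).mul_left _)
  simp only [horth] at hsum
  rw [fourierCoeff1_eq_integral_fourier]
  exact hsum.unique (hasSum_ite_eq n (a n))

theorem hasAbsFourierSeries_fourierCoeff1 {φ : ℝ → ℂ} (hc : Continuous φ)
    (hper : Function.Periodic φ 1) (hs : Summable fun n => ‖fourierCoeff1 φ n‖) :
    HasAbsFourierSeries 1 φ (fourierCoeff1 φ) := by
  have : Fact ((0 : ℝ) < 1) := ⟨one_pos⟩
  let Φ : C(AddCircle (1 : ℝ), ℂ) := ⟨hper.lift, continuous_coinduced_dom.2 hc⟩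
  have hcoeff : fourierCoeff Φ = fourierCoeff1 φ := funext fun n => by
    rw [fourierCoeff_eq_intervalIntegral _ n 0, fourierCoeff1_eq_integral_fourier, zero_add,
      div_one, one_smul]
    rfl
  refine ⟨hs, fun x => ?_⟩
  have h := has_pointwise_sum_fourier_series_of_summable (hcoeff ▸ hs.of_norm)
    (x : AddCircle (1 : ℝ))
  simp only [hcoeff, smul_eq_mul] at h
  exact h

theorem exists_hasAbsFourierSeries_odeSol {T : ℝ} {φ : ℝ → ℂ} {a : ℤ → ℂ}
    (hφ : HasAbsFourierSeries T φ a) (t : ℝ) :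
    ∃ b, HasAbsFourierSeries T (fun x => odeSol φ x t) b ∧
      ∑' n, ‖b n‖ ≤ (∑' n, ‖a n‖) * Real.exp (|t| * (∑' n, ‖a n‖) ^ 2) ∧
      ∀ n, ‖b n‖ ≤ (⨆ m, ‖a m‖) * Real.exp (|t| * (∑' n, ‖a n‖) ^ 2) := by
  set M := ∑' n, ‖a n‖
  have hq := hφ.mul hφ.star
  set B := ∑' n, ‖discreteConv a (fun n => star (a (-n))) n‖
  have hBM : B ≤ M ^ 2 := by
    have h := tsum_norm_discreteConv_le hφ.1 hφ.star.1
    rwa [tsum_congr fun n => norm_star (a (-n)), tsum_comp_neg (‖a ·‖), ← sq] at h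
  set z : ℕ → ℂ := fun k => (Complex.I * t) ^ k / k.factorial
  have hz : ∀ k, ‖z k‖ * B ^ k = (|t| * B) ^ k / k.factorial := fun k => by
    simp [z, mul_pow, div_mul_eq_mul_div]
  have hF : ∀ x, HasSum (fun k => z k * (φ x * (φ x * star (φ x)) ^ k)) (odeSol φ x t) :=
    fun x => by
    have hw : Complex.I * ((‖φ x‖ ^ 2 : ℝ) : ℂ) * t = Complex.I * t * (φ x * star (φ x)) := by
      rw [← starRingEnd_apply, Complex.mul_conj']
      push_cast
      ring
    have hterm : (fun k => z k * (φ x * (φ x * star (φ x)) ^ k))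
        = fun k => φ x * ((Complex.I * t * (φ x * star (φ x))) ^ k / k.factorial) := by
      funext k
      simp only [z]
      ring
    rw [hterm, odeSol, hw, Complex.exp_eq_exp_ℂ]
    exact (NormedSpace.expSeries_div_hasSum_exp _).mul_left (φ x)
  have hzs : Summable fun k => ‖z k‖ * B ^ k := by
    simpa only [hz] using Real.summable_pow_div_factorial (|t| * B)
  have hexp : ∑' k, ‖z k‖ * B ^ k = Real.exp (|t| * B) := by
    rw [tsum_congr hz, Real.exp_eq_exp_ℝ]
    exact (NormedSpace.expSeries_div_hasSum_exp (|t| * B)).tsum_eq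
  obtain ⟨b, hb, hb1, hbsup⟩ := hφ.exists_of_hasSum_mul_pow hq hzs hF
  have hmono : Real.exp (|t| * B) ≤ Real.exp (|t| * M ^ 2) :=
    Real.exp_le_exp.2 (mul_le_mul_of_nonneg_left hBM (abs_nonneg t))
  rw [hexp] at hb1 hbsup
  exact ⟨b, hb, hb1.trans (mul_le_mul_of_nonneg_left hmono (tsum_nonneg fun _ => norm_nonneg _)),
    fun n => (hbsup n).trans (mul_le_mul_of_nonneg_left hmono
      (Real.iSup_nonneg fun _ => norm_nonneg _))⟩

/-- Wiener algebra (`FL¹`) and `FL^∞` bounds for the dispersionless ODE on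
the time scale `t ≲ M^{−2}`, where `M = Σ_n |φ̂(n)|`. -/
theorem ode_wiener_algebra_bounds :
    ∃ c C : ℝ, 0 < c ∧ 0 < C ∧
      ∀ φ : ℝ → ℂ, Continuous φ → (∀ x : ℝ, φ (x + 1) = φ x) →
      Summable (fun n : ℤ => ‖fourierCoeff1 φ n‖) →
      ∀ t : ℝ, 0 ≤ t → t ≤ c / (∑' n : ℤ, ‖fourierCoeff1 φ n‖)^2 →
        Summable (fun n : ℤ => ‖fourierCoeff1 (fun x => odeSol φ x t) n‖) ∧
        (∑' n : ℤ, ‖fourierCoeff1 (fun x => odeSol φ x t) n‖)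
          ≤ C * ∑' n : ℤ, ‖fourierCoeff1 φ n‖ ∧
        ∀ n : ℤ, ‖fourierCoeff1 (fun x => odeSol φ x t) n‖
          ≤ C * ⨆ m : ℤ, ‖fourierCoeff1 φ m‖ := by
  refine ⟨1, Real.exp 1, one_pos, Real.exp_pos 1, fun φ hc hper hs t ht htM => ?_⟩
  obtain ⟨b, hb, hb1, hbsup⟩ :=
    exists_hasAbsFourierSeries_odeSol (hasAbsFourierSeries_fourierCoeff1 hc hper hs) t
  have hexp : Real.exp (|t| * (∑' n, ‖fourierCoeff1 φ n‖) ^ 2) ≤ Real.exp 1 := by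
    refine Real.exp_le_exp.2 ?_
    rw [abs_of_nonneg ht]
    rcases (sq_nonneg (∑' n, ‖fourierCoeff1 φ n‖)).eq_or_lt with hM | hM
    · simp [← hM]
    · exact (le_div_iff₀ hM).1 htM
  rw [hb.fourierCoeff1_eq]
  refine ⟨hb.1, ?_, fun n => ?_⟩
  · rw [mul_comm]
    exact hb1.trans (mul_le_mul_of_nonneg_left hexp (tsum_nonneg fun _ => norm_nonneg _))
  · rw [mul_comm]
    exact (hbsup n).trans
      (mul_le_mul_of_nonneg_left hexp (Real.iSup_nonneg fun _ => norm_nonneg _))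
end

section
/- There exist universal constants c > 0 and C > 0 such that the following holds. Let φ̂ : ℤ → ℂ satisfy M := Σ_{n∈ℤ} |φ̂(n)| < ∞, let 0 < T ≤ c M^{−2}, and let a : ℤ → [0,T] → ℂ be such that t ↦ Σ_n |a_n(t)| is finite and continuous on [0,T] and a satisfies the Duhamel system with data φ̂, i.e. a_n(t) = φ̂(n) + i ∫₀^t Σ_{(n₁,n₂,n₃)∈Γ(n)} e^{−iΦ(n̄)t'} a_{n₁}(t') \overline{a_{n₂}(t')} a_{n₃}(t') dt' for all n ∈ ℤ and t ∈ [0,T]. Then sup_{t∈[0,T]} Σ_{n∈ℤ} |a_n(t)| ≤ C M and sup_{t∈[0,T]} sup_{n∈ℤ} |a_n(t)| ≤ C sup_{n∈ℤ} |φ̂(n)|. -/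
/-!
Write `S(t) = ∑ₙ ‖aₙ(t)‖`. Since `|e^{-iΦt}| = 1` and summing the cubic term over `n` sums over
all of `ℤ³`, the Duhamel formula gives `S(t) ≤ M + ∫₀ᵗ S³`. At the first time `S` reaches `2M`
this would give `S ≤ M + 8M³T < 2M`, so `S < 2M` throughout when `8M²T < 1`. For the sup norm,
`Γ(n)` is parametrised by `(n₂, n₃)`, so the cubic term at `n` is at most `Q S²` with
`Q = sup_{t,n} ‖aₙ(t)‖`; hence `Q ≤ sup ‖φ̂‖ + 4M²T Q`, and absorbing gives `Q ≤ 2 sup ‖φ̂‖`.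
-/

open MeasureTheory Set

section Series

variable {ι : Type*} {f : ι → ℝ}

theorem hasSum_pair_mul_of_nonneg (hf : Summable f) (h0 : 0 ≤ f) :
    HasSum (fun q : ι × ι => f q.1 * f q.2) ((∑' i, f i) ^ 2) := by
  have h2 := hf.mul_of_nonneg hf h0 h0
  rw [sq, hf.tsum_mul_tsum hf h2]
  exact h2.hasSum

theorem hasSum_triple_mul_of_nonneg (hf : Summable f) (h0 : 0 ≤ f) :
    HasSum (fun p : ι × ι × ι => f p.1 * (f p.2.1 * f p.2.2)) ((∑' i, f i) ^ 3) := by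
  have h2 := hasSum_pair_mul_of_nonneg hf h0
  have h3 := hf.mul_of_nonneg h2.summable h0 fun q => mul_nonneg (h0 q.1) (h0 q.2)
  rw [pow_succ', ← h2.tsum_eq, hf.tsum_mul_tsum h2.summable h3]
  exact h3.hasSum

theorem sum_tsum_fiber_le {α β : Type*} {g : β → ℝ} (hg : Summable g) (h0 : 0 ≤ g)
    (F : β → α) (s : Finset α) :
    ∑ n ∈ s, ∑' p : {p // n = F p}, g p ≤ ∑' p, g p := by
  have hfib := hg.hasSum.tsum_fiberwise F
  have hfiber : ∀ n, ∑' p : {p // n = F p}, g p = ∑' p : F ⁻¹' {n}, g p := fun n =>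
    (Equiv.subtypeEquivRight fun p => eq_comm).tsum_eq (fun p : F ⁻¹' {n} => g p)
  simp only [hfiber, ← hfib.tsum_eq]
  exact hfib.summable.sum_le_tsum s fun n _ => tsum_nonneg fun p => h0 p

end Series

theorem sum_integral_le_integral_of_sum_le {α ι : Type*} [MeasurableSpace α] {μ : Measure α}
    {f : ι → α → ℝ} {g : α → ℝ} (s : Finset ι) (hf : ∀ i ∈ s, 0 ≤ f i) (hg : Integrable g μ)
    (hfg : ∀ᵐ x ∂μ, ∑ i ∈ s, f i x ≤ g x) :
    ∑ i ∈ s, ∫ x, f i x ∂μ ≤ ∫ x, g x ∂μ := by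
  classical
  -- Non-integrable summands have integral `0`, so only the integrable ones matter.
  set s' := s.filter fun i => Integrable (f i) μ
  have hs' : s' ⊆ s := Finset.filter_subset _ _
  have hint : ∀ i ∈ s', Integrable (f i) μ := fun i hi => (Finset.mem_filter.1 hi).2
  rw [← Finset.sum_subset hs' fun i hi hi' =>
    integral_undef (by simpa [s', hi] using hi'), ← integral_finsetSum s' hint]
  refine integral_mono_ae (integrable_finsetSum s' hint) hg ?_
  filter_upwards [hfg] with x hx
  exact (Finset.sum_le_sum_of_subset_of_nonneg hs' fun i hi _ => hf i hi x).trans hx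

theorem lt_two_mul_of_le_add_integral_cube {S : ℝ → ℝ} {M T : ℝ} (hM : 0 < M)
    (hT : 8 * M ^ 2 * T < 1) (hcont : ContinuousOn S (Icc 0 T))
    (h : ∀ t ∈ Icc 0 T, S t ≤ M + ∫ t' in (0:ℝ)..t, S t' ^ 3) :
    ∀ t ∈ Icc 0 T, S t < 2 * M := by
  by_contra! hexists
  obtain ⟨t₀, ht₀, h₀⟩ := hexists
  set E := Icc 0 T ∩ S ⁻¹' Ici (2 * M)
  have hEbdd : BddBelow E := ⟨0, fun x hx => hx.1.1⟩
  have hu : sInf E ∈ E :=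
    (hcont.preimage_isClosed_of_isClosed isClosed_Icc isClosed_Ici).csInf_mem ⟨t₀, ht₀, h₀⟩ hEbdd
  set u := sInf E
  have hbelow : ∀ x ∈ Ioo 0 u, S x ^ 3 ≤ (2 * M) ^ 3 := fun x hx => by
    refine (Odd.pow_le_pow (by decide)).2 (le_of_not_ge fun hx' => ?_)
    exact (csInf_le hEbdd ⟨⟨hx.1.le, hx.2.le.trans hu.1.2⟩, hx'⟩).not_gt hx.2
  have hint : ∫ t' in (0:ℝ)..u, S t' ^ 3 ≤ (2 * M) ^ 3 * u := by
    have hS3 : IntervalIntegrable (fun t' => S t' ^ 3) volume 0 u :=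
      ((hcont.mono (Icc_subset_Icc_right hu.1.2)).pow 3).intervalIntegrable_of_Icc hu.1.1
    refine (intervalIntegral.integral_mono_on_of_le_Ioo hu.1.1 hS3 intervalIntegrable_const
      hbelow).trans_eq ?_
    rw [intervalIntegral.integral_const, smul_eq_mul, sub_zero, mul_comm]
  have hu3 : (2 * M) ^ 3 * u < M := by
    nlinarith [mul_le_mul_of_nonneg_left hu.1.2 (by positivity : (0:ℝ) ≤ 8 * M ^ 3),
      mul_lt_mul_of_pos_left hT hM]
  have h1 : S u ≤ M + ∫ t' in (0:ℝ)..u, S t' ^ 3 := h u hu.1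
  have h2 : 2 * M ≤ S u := hu.2
  linarith

noncomputable def nlsTerm (b : ℤ → ℂ) (t : ℝ) (n : ℤ) (p : ℤ × ℤ × ℤ) : ℂ :=
  Complex.exp (-Complex.I * ((n^2 - p.1^2 + p.2.1^2 - p.2.2^2 : ℤ) : ℂ) * (t : ℂ)) *
    b p.1 * (starRingEnd ℂ) (b p.2.1) * b p.2.2

noncomputable def nlsNonlinearity (b : ℤ → ℂ) (t : ℝ) (n : ℤ) : ℂ :=
  ∑' p : {p : ℤ × ℤ × ℤ // n = p.1 - p.2.1 + p.2.2}, nlsTerm b t n p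

def resonanceEquiv (n : ℤ) : {p : ℤ × ℤ × ℤ // n = p.1 - p.2.1 + p.2.2} ≃ ℤ × ℤ where
  toFun p := p.1.2
  invFun q := ⟨(n + q.1 - q.2, q), by ring⟩
  left_inv := fun ⟨⟨p₁, p₂, p₃⟩, hp⟩ =>
    Subtype.ext (Prod.ext (show n + p₂ - p₃ = p₁ by dsimp only at hp; omega) rfl)
  right_inv _ := rfl

section Nonlinearity

variable {b : ℤ → ℂ}

theorem norm_nlsTerm (t : ℝ) (n : ℤ) (p : ℤ × ℤ × ℤ) :
    ‖nlsTerm b t n p‖ = ‖b p.1‖ * (‖b p.2.1‖ * ‖b p.2.2‖) := by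
  have hphase :
      ‖Complex.exp (-Complex.I * ((n^2 - p.1^2 + p.2.1^2 - p.2.2^2 : ℤ) : ℂ) * (t : ℂ))‖ = 1 := by
    rw [← Complex.norm_exp_ofReal_mul_I (-((n^2 - p.1^2 + p.2.1^2 - p.2.2^2 : ℤ) * t))]
    push_cast
    ring_nf
  rw [nlsTerm, norm_mul, norm_mul, norm_mul, hphase, Complex.norm_conj]
  ring

theorem sum_norm_nlsNonlinearity_le (hb : Summable fun m => ‖b m‖) (t : ℝ) (s : Finset ℤ) :
    ∑ n ∈ s, ‖nlsNonlinearity b t n‖ ≤ (∑' m, ‖b m‖) ^ 3 := by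
  have hw := hasSum_triple_mul_of_nonneg hb fun _ => norm_nonneg _
  calc ∑ n ∈ s, ‖nlsNonlinearity b t n‖
      ≤ ∑ n ∈ s, ∑' p : {p : ℤ × ℤ × ℤ // n = p.1 - p.2.1 + p.2.2},
          ‖b p.1.1‖ * (‖b p.1.2.1‖ * ‖b p.1.2.2‖) :=
        Finset.sum_le_sum fun n _ => tsum_of_norm_bounded (hw.summable.subtype _).hasSum
          fun p => (norm_nlsTerm t n p).le
    _ ≤ ∑' p : ℤ × ℤ × ℤ, ‖b p.1‖ * (‖b p.2.1‖ * ‖b p.2.2‖) :=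
        sum_tsum_fiber_le hw.summable (fun _ => by positivity) _ s
    _ = (∑' m, ‖b m‖) ^ 3 := hw.tsum_eq

theorem norm_nlsNonlinearity_le_mul_sq (hb : Summable fun m => ‖b m‖) {Q : ℝ}
    (hQ : ∀ m, ‖b m‖ ≤ Q) (t : ℝ) (n : ℤ) :
    ‖nlsNonlinearity b t n‖ ≤ Q * (∑' m, ‖b m‖) ^ 2 := by
  have hw := ((resonanceEquiv n).hasSum_iff.2
    (hasSum_pair_mul_of_nonneg hb fun _ => norm_nonneg _)).mul_left Q
  refine tsum_of_norm_bounded hw fun p => (norm_nlsTerm t n p).trans_le ?_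
  exact mul_le_mul_of_nonneg_right (hQ _) (by positivity)

end Nonlinearity

def IsDuhamelSolution (φhat : ℤ → ℂ) (T : ℝ) (a : ℤ → ℝ → ℂ) : Prop :=
  ∀ n : ℤ, ∀ t ∈ Icc (0:ℝ) T,
    a n t = φhat n + Complex.I * ∫ t' in (0:ℝ)..t, nlsNonlinearity (fun m => a m t') t' n

namespace IsDuhamelSolution

variable {φhat : ℤ → ℂ} {T : ℝ} {a : ℤ → ℝ → ℂ}

theorem norm_le (h : IsDuhamelSolution φhat T a) {n : ℤ} {t : ℝ} (ht : t ∈ Icc 0 T) :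
    ‖a n t‖ ≤ ‖φhat n‖ + ‖∫ t' in (0:ℝ)..t, nlsNonlinearity (fun m => a m t') t' n‖ := by
  rw [h n t ht]
  exact (norm_add_le _ _).trans_eq (by rw [norm_mul, Complex.norm_I, one_mul])

theorem tsum_norm_le_add_integral_cube (h : IsDuhamelSolution φhat T a)
    (hφ : Summable fun n => ‖φhat n‖) (hsum : ∀ t ∈ Icc 0 T, Summable fun n => ‖a n t‖)
    (hcont : ContinuousOn (fun t => ∑' n, ‖a n t‖) (Icc 0 T)) {t : ℝ} (ht : t ∈ Icc 0 T) :
    ∑' n, ‖a n t‖ ≤ ∑' n, ‖φhat n‖ + ∫ t' in (0:ℝ)..t, (∑' n, ‖a n t'‖) ^ 3 := by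
  have hsub : Icc 0 t ⊆ Icc 0 T := Icc_subset_Icc_right ht.2
  refine (hsum t ht).tsum_le_of_sum_le fun s => ?_
  have hduhamel : ∑ n ∈ s, ‖∫ t' in (0:ℝ)..t, nlsNonlinearity (fun m => a m t') t' n‖
      ≤ ∫ t' in (0:ℝ)..t, (∑' n, ‖a n t'‖) ^ 3 := by
    refine (Finset.sum_le_sum fun n _ =>
      intervalIntegral.norm_integral_le_integral_norm ht.1).trans ?_
    simp only [intervalIntegral.integral_of_le ht.1]
    refine sum_integral_le_integral_of_sum_le s (fun _ _ _ => norm_nonneg _)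
      (((hcont.mono hsub).pow 3).integrableOn_Icc.mono_set Ioc_subset_Icc_self) ?_
    refine ae_restrict_of_forall_mem measurableSet_Ioc fun x hx => ?_
    exact sum_norm_nlsNonlinearity_le (hsum x (hsub (Ioc_subset_Icc_self hx))) x s
  calc ∑ n ∈ s, ‖a n t‖
      ≤ ∑ n ∈ s, (‖φhat n‖ + ‖∫ t' in (0:ℝ)..t, nlsNonlinearity (fun m => a m t') t' n‖) :=
        Finset.sum_le_sum fun n _ => h.norm_le ht
    _ ≤ ∑' n, ‖φhat n‖ + ∫ t' in (0:ℝ)..t, (∑' n, ‖a n t'‖) ^ 3 := by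
        rw [Finset.sum_add_distrib]
        exact add_le_add (hφ.sum_le_tsum s fun _ _ => norm_nonneg _) hduhamel

theorem norm_le_add_mul (h : IsDuhamelSolution φhat T a)
    (hsum : ∀ t ∈ Icc 0 T, Summable fun n => ‖a n t‖) {Q B : ℝ}
    (hQ : ∀ t ∈ Icc 0 T, ∀ m, ‖a m t‖ ≤ Q) (hB : ∀ t ∈ Icc 0 T, ∑' m, ‖a m t‖ ≤ B)
    {n : ℤ} {t : ℝ} (ht : t ∈ Icc 0 T) :
    ‖a n t‖ ≤ ‖φhat n‖ + Q * B ^ 2 * t := by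
  have hbound : ∀ x ∈ uIoc 0 t, ‖nlsNonlinearity (fun m => a m x) x n‖ ≤ Q * B ^ 2 := by
    intro x hx
    rw [uIoc_of_le ht.1] at hx
    have hxT : x ∈ Icc 0 T := ⟨hx.1.le, hx.2.trans ht.2⟩
    refine (norm_nlsNonlinearity_le_mul_sq (hsum x hxT) (hQ x hxT) x n).trans ?_
    exact mul_le_mul_of_nonneg_left
      (pow_le_pow_left₀ (tsum_nonneg fun _ => norm_nonneg _) (hB x hxT) 2)
      ((norm_nonneg _).trans (hQ x hxT 0))
  have hintegral := intervalIntegral.norm_integral_le_of_norm_le_const hbound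
  rw [sub_zero, abs_of_nonneg ht.1] at hintegral
  exact (h.norm_le ht).trans (add_le_add le_rfl hintegral)

theorem norm_le_two_mul_iSup (h : IsDuhamelSolution φhat T a)
    (hφ : Summable fun n => ‖φhat n‖) (hsum : ∀ t ∈ Icc 0 T, Summable fun n => ‖a n t‖)
    {B : ℝ} (hB : ∀ t ∈ Icc 0 T, ∑' m, ‖a m t‖ ≤ B) (hBT : 2 * B ^ 2 * T ≤ 1)
    {n : ℤ} {t : ℝ} (ht : t ∈ Icc 0 T) :
    ‖a n t‖ ≤ 2 * ⨆ m, ‖φhat m‖ := by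
  have hφbdd : BddAbove (range fun m => ‖φhat m‖) :=
    ⟨_, forall_mem_range.2 fun m => hφ.le_tsum m fun _ _ => norm_nonneg _⟩
  have : Nonempty (Icc 0 T × ℤ) := ⟨(⟨t, ht⟩, n)⟩
  have hbdd : BddAbove (range fun q : Icc 0 T × ℤ => ‖a q.2 q.1‖) :=
    ⟨B, forall_mem_range.2 fun q =>
      ((hsum q.1 q.1.2).le_tsum q.2 fun _ _ => norm_nonneg _).trans (hB q.1 q.1.2)⟩
  set Q := ⨆ q : Icc 0 T × ℤ, ‖a q.2 q.1‖
  have hQ : ∀ s ∈ Icc 0 T, ∀ m, ‖a m s‖ ≤ Q := fun s hs m => le_ciSup hbdd (⟨s, hs⟩, m)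
  have hQ0 : 0 ≤ Q := (norm_nonneg _).trans (hQ t ht n)
  -- `Q` is finite (at most `B`), so the `Q / 2` can be absorbed.
  have habsorb : Q ≤ (⨆ m, ‖φhat m‖) + Q / 2 := ciSup_le fun ⟨⟨s, hs⟩, m⟩ => by
    have hs' : Q * B ^ 2 * s ≤ Q * B ^ 2 * T := by gcongr; exact hs.2
    nlinarith [h.norm_le_add_mul hsum hQ hB (n := m) hs, le_ciSup hφbdd m,
      mul_le_mul_of_nonneg_left hBT hQ0]
  linarith [hQ t ht n]

end IsDuhamelSolution

/-- A priori `FL¹` and `FL^∞` bounds for solutions of the Duhamel system of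
the interaction representation of the cubic NLS on the circle, on the time
scale `T ≲ M^{−2}` where `M = Σ_n |φ̂(n)|`. -/
theorem duhamel_a_priori_bounds :
    ∃ c C : ℝ, 0 < c ∧ 0 < C ∧
      ∀ (φhat : ℤ → ℂ), Summable (fun n : ℤ => ‖φhat n‖) →
      ∀ T : ℝ, 0 < T → T ≤ c / (∑' n : ℤ, ‖φhat n‖)^2 →
      ∀ a : ℤ → ℝ → ℂ,
        (∀ t ∈ Set.Icc (0:ℝ) T, Summable (fun n : ℤ => ‖a n t‖)) →
        ContinuousOn (fun t : ℝ => ∑' n : ℤ, ‖a n t‖) (Set.Icc (0:ℝ) T) →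
        (∀ (n : ℤ), ∀ t ∈ Set.Icc (0:ℝ) T,
          a n t = φhat n + Complex.I *
            ∫ t' in (0:ℝ)..t,
              ∑' p : {p : ℤ × ℤ × ℤ // n = p.1 - p.2.1 + p.2.2},
                Complex.exp (-Complex.I *
                    ((n^2 - p.1.1^2 + p.1.2.1^2 - p.1.2.2^2 : ℤ) : ℂ) * (t' : ℂ)) *
                  a p.1.1 t' * (starRingEnd ℂ) (a p.1.2.1 t') * a p.1.2.2 t') →
        (∀ t ∈ Set.Icc (0:ℝ) T,
          (∑' n : ℤ, ‖a n t‖) ≤ C * ∑' n : ℤ, ‖φhat n‖) ∧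
        (∀ t ∈ Set.Icc (0:ℝ) T, ∀ n : ℤ,
          ‖a n t‖ ≤ C * ⨆ m : ℤ, ‖φhat m‖) := by
  refine ⟨1 / 16, 2, by norm_num, by norm_num, fun φhat hφ T hT hTc a hsum hcont hduh => ?_⟩
  replace hduh : IsDuhamelSolution φhat T a := hduh
  set M := ∑' n : ℤ, ‖φhat n‖
  -- `c / 0 = 0`, so `0 < T ≤ c / M ^ 2` rules out `M = 0`.
  have hM : 0 < M := (tsum_nonneg fun _ => norm_nonneg _).lt_of_ne' fun hM0 : M = 0 => by
    rw [hM0] at hTc; norm_num at hTc; linarith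
  have hTM : T * M ^ 2 ≤ 1 / 16 := (le_div_iff₀ (by positivity)).1 hTc
  have hL1 : ∀ t ∈ Icc 0 T, ∑' n, ‖a n t‖ < 2 * M :=
    lt_two_mul_of_le_add_integral_cube hM (by nlinarith) hcont
      fun t ht => hduh.tsum_norm_le_add_integral_cube hφ hsum hcont ht
  exact ⟨fun t ht => (hL1 t ht).le, fun t ht n =>
    hduh.norm_le_two_mul_iSup hφ hsum (fun s hs => (hL1 s hs).le) (by nlinarith) ht⟩
end
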